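/- Let G be a graph with minimum degree δ and suppose there exists a set K of k vertices such that G − K has minimum degree at least 2 and girth at least 5. Then Z(G) ≥ 2δ − 3k − 2. -/

import Mathlib

/-- The set of vertices eventually colored by the zero forcing process started from `S`:
a vertex is forced if it is initially colored, or if some colored neighbor `v` has all its
other neighbors colored. -/
inductive SimpleGraph.Forced {V : Type*} (G : SimpleGraph V) (S : Set V) : V → Prop
  | init {v : V} : v ∈ S → G.Forced S v
  | force {v w : V} : G.Adj v w → G.Forced S v →
      (∀ u, G.Adj v u → u ≠ w → G.Forced S u) → G.Forced S w

/-- `S` is a zero forcing set of `G` if the process colors every vertex. -/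
def SimpleGraph.IsZeroForcingSet {V : Type*} (G : SimpleGraph V) (S : Set V) : Prop :=
  ∀ v, G.Forced S v

/-- The zero forcing number `Z(G)`: minimum size of a zero forcing set. -/
noncomputable def SimpleGraph.zeroForcingNumber {V : Type*} (G : SimpleGraph V) [Fintype V] : ℕ :=
  sInf {k | ∃ S : Finset V, G.IsZeroForcingSet ↑S ∧ S.card = k}

namespace ZFAux

open SimpleGraph Finset

variable {V : Type*} (G : SimpleGraph V)

lemma no_triangle {G : SimpleGraph V} (hg : 5 ≤ G.egirth) {a b c : V} (hab : G.Adj a b)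
    (hbc : G.Adj b c) (hca : G.Adj c a) : False := by
  rw [SimpleGraph.le_egirth] at hg
  have h1 : a ≠ b := hab.ne
  have h2 : b ≠ c := hbc.ne
  have h3 : c ≠ a := hca.ne
  have := hg a (.cons hab (.cons hbc (.cons hca .nil))) ?_
  · simp at this; exact absurd this (by decide)
  · simp [Walk.isCycle_def, Walk.isTrail_def, Sym2.eq, Sym2.rel_iff]
    aesop

lemma no_c4 {G : SimpleGraph V} (hg : 5 ≤ G.egirth) {a b c d : V} (hab : G.Adj a b)
    (hbc : G.Adj b c) (hcd : G.Adj c d) (hda : G.Adj d a) (hac : a ≠ c) (hbd : b ≠ d) :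
    False := by
  rw [SimpleGraph.le_egirth] at hg
  have h1 : a ≠ b := hab.ne
  have h2 : b ≠ c := hbc.ne
  have h3 : c ≠ d := hcd.ne
  have h4 : d ≠ a := hda.ne
  have := hg a (.cons hab (.cons hbc (.cons hcd (.cons hda .nil)))) ?_
  · simp at this; exact absurd this (by decide)
  · simp [Walk.isCycle_def, Walk.isTrail_def, Sym2.eq, Sym2.rel_iff]
    aesop

lemma forced_mono {S T : Set V} (h : S ⊆ T) {v : V} (hv : G.Forced S v) : G.Forced T v := by
  induction hv with
  | init h' => exact .init (h h')
  | force ha _ _ ihv ihprem => exact .force ha ihv ihprem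

lemma forced_mem_of_closed {S : Set V}
    (hcl : ∀ v w, v ∈ S → G.Adj v w → (∀ u, G.Adj v u → u ≠ w → u ∈ S) → w ∈ S)
    {v : V} (hv : G.Forced S v) : v ∈ S := by
  induction hv with
  | init h' => exact h'
  | force ha _ _ ihv ihprem => exact hcl _ _ ihv ha ihprem

/-- If `S` is a zero forcing set other than everything, some vertex of `S` can perform
a force. -/
lemma exists_force {S : Set V} (hS : G.IsZeroForcingSet S) (hne : S ≠ Set.univ) :
    ∃ v w, v ∈ S ∧ w ∉ S ∧ G.Adj v w ∧ ∀ u, G.Adj v u → u ≠ w → u ∈ S := by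
  by_contra h
  push_neg at h
  apply hne
  ext z
  simp only [Set.mem_univ, iff_true]
  refine forced_mem_of_closed G ?_ (hS z)
  intro v w hv ha hprem
  by_contra hw
  obtain ⟨u, h1, h2, h3⟩ := h v w hv hw ha
  exact h3 (hprem u h1 h2)

/-- One step of the zero forcing process. -/
def stageSet (F : Set V) : Set V :=
  F ∪ {w | ∃ v ∈ F, G.Adj v w ∧ ∀ u, G.Adj v u → u ≠ w → u ∈ F}

/-- The stages of the zero forcing process. -/
def stages (S : Set V) : ℕ → Set V
  | 0 => S
  | n + 1 => stageSet G (stages S n)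

lemma stages_mono {S : Set V} {m n : ℕ} (h : m ≤ n) : stages G S m ⊆ stages G S n := by
  induction n with
  | zero => obtain rfl : m = 0 := Nat.le_zero.mp h; exact subset_rfl
  | succ n ih =>
    rcases Nat.le_succ_iff.mp h with h' | rfl
    · exact (ih h').trans Set.subset_union_left
    · exact subset_rfl

lemma exists_uniform_stage [Fintype V] {S : Set V} (P : V → Prop)
    (h : ∀ u, P u → ∃ n, u ∈ stages G S n) : ∃ N, ∀ u, P u → u ∈ stages G S N := by
  classical
  choose f hf using h
  refine ⟨Finset.univ.sup (fun u => if h' : P u then f u h' else 0), fun u hu => ?_⟩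
  refine stages_mono G ?_ (hf u hu)
  have := Finset.le_sup (f := fun u => if h' : P u then f u h' else 0) (Finset.mem_univ u)
  simpa [hu] using this

lemma forced_stage [Fintype V] {S : Set V} {v : V} (h : G.Forced S v) :
    ∃ n, v ∈ stages G S n := by
  induction h with
  | init h' => exact ⟨0, h'⟩
  | @force v w ha _ _ ihv ihprem =>
    obtain ⟨n₀, hn₀⟩ := ihv
    obtain ⟨N, hN⟩ := exists_uniform_stage G (fun u => G.Adj v u ∧ u ≠ w)
      (fun u hu => ihprem u hu.1 hu.2)
    exact ⟨max n₀ N + 1, Or.inr ⟨v, stages_mono G (le_max_left _ _) hn₀, ha,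
      fun u hu hne => stages_mono G (le_max_right _ _) (hN u ⟨hu, hne⟩)⟩⟩



variable {V : Type*} [Fintype V] [DecidableEq V] (G : SimpleGraph V)

/-- Deleting a finite set `K` of vertices increases the zero forcing number by at most
`|K|`: from a zero forcing set of `G` we obtain one of `G − K`. -/
lemma zf_delete (K : Finset V) (S : Finset V) (hS : G.IsZeroForcingSet ↑S) :
    ∃ T : Finset ((↑K : Set V)ᶜ : Set V),
      (G.induce ((↑K : Set V)ᶜ)).IsZeroForcingSet ↑T ∧ T.card ≤ S.card + K.card := by
  classical
  set st : ℕ → Set V := stages G ↑S with hst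
  set P : V → Prop := fun w => ∃ v ∈ K, ∃ n, w ∉ st n ∧ G.Adj v w ∧
      ∀ u, G.Adj v u → u ≠ w → u ∈ st n with hP
  set W : Finset V := Finset.univ.filter P with hW
  -- the forcer map
  have hWcard : W.card ≤ K.card := by
    set f : V → V := fun w => if h : P w then h.choose else w with hf
    apply Finset.card_le_card_of_injOn f
    · intro w hw
      have hPw : P w := (Finset.mem_filter.mp hw).2
      have := hPw.choose_spec.1
      simpa [hf, hPw] using this
    · intro w1 hw1 w2 hw2 heq
      have hP1 : P w1 := (Finset.mem_filter.mp hw1).2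
      have hP2 : P w2 := (Finset.mem_filter.mp hw2).2
      simp only [hf, dif_pos hP1, dif_pos hP2] at heq
      obtain ⟨n1, hn1, hadj1, hprem1⟩ := hP1.choose_spec.2
      obtain ⟨n2, hn2, hadj2, hprem2⟩ := hP2.choose_spec.2
      rw [heq] at hadj1 hprem1
      by_contra hne
      have h21 : w2 ∈ st n1 := hprem1 w2 hadj2 (Ne.symm hne)
      have h12 : w1 ∈ st n2 := hprem2 w1 hadj1 hne
      rcases le_total n1 n2 with h | h
      · exact hn2 (stages_mono G h h21)
      · exact hn1 (stages_mono G h h12)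
  refine ⟨(S.filter (· ∉ K) ∪ W).subtype (fun x => x ∈ ((↑K : Set V)ᶜ : Set V)), ?_, ?_⟩
  · -- zero forcing
    set T := (S.filter (· ∉ K) ∪ W).subtype (fun x => x ∈ ((↑K : Set V)ᶜ : Set V)) with hT
    have main : ∀ n (y : V) (hy : y ∈ st n) (hyK : y ∈ ((↑K : Set V)ᶜ : Set V)),
        (G.induce ((↑K : Set V)ᶜ)).Forced ↑T ⟨y, hyK⟩ := by
      intro n
      induction n with
      | zero =>
        intro y hy hyK
        refine Forced.init ?_
        simp only [hT, Finset.mem_coe, Finset.mem_subtype, Set.mem_setOf_eq, Finset.mem_union, Finset.mem_filter]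
        exact Or.inl ⟨hy, by simpa using hyK⟩
      | succ n ih =>
        intro y hy hyK
        rcases hy with hy | ⟨v, hvst, hadj, hprem⟩
        · exact ih y hy hyK
        by_cases hyn : y ∈ st n
        · exact ih y hyn hyK
        by_cases hvK : v ∈ K
        · refine Forced.init ?_
          simp only [hT, Finset.mem_coe, Finset.mem_subtype, Set.mem_setOf_eq, Finset.mem_union]
          exact Or.inr (Finset.mem_filter.mpr ⟨Finset.mem_univ _, ⟨v, hvK, n, hyn, hadj, hprem⟩⟩)
        · have hvKc : v ∈ ((↑K : Set V)ᶜ : Set V) := by simpa using hvK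
          refine Forced.force (v := (⟨v, hvKc⟩ : ((↑K : Set V)ᶜ : Set V))) (w := (⟨y, hyK⟩ : ((↑K : Set V)ᶜ : Set V))) ?_ (ih v hvst hvKc) ?_
          · simpa using hadj
          · rintro ⟨u, huKc⟩ hadj' hne'
            have : G.Adj v u := by simpa using hadj'
            have hune : u ≠ y := fun h => hne' (by simpa using h)
            exact ih u (hprem u this hune) huKc
    intro z
    obtain ⟨n, hn⟩ := forced_stage G (hS ↑z)
    have := main n ↑z hn z.2
    simpa using this
  · -- cardinality
    calc ((S.filter (· ∉ K) ∪ W).subtype _).card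
        ≤ (S.filter (· ∉ K) ∪ W).card := by
          rw [Finset.card_subtype]; exact Finset.card_filter_le _ _
      _ ≤ (S.filter (· ∉ K)).card + W.card := Finset.card_union_le _ _
      _ ≤ S.card + K.card := Nat.add_le_add (Finset.card_filter_le _ _) hWcard

end ZFAux

section DK
open SimpleGraph Finset

variable {V : Type*} [Fintype V] [DecidableEq V] (H : SimpleGraph V) [DecidableRel H.Adj]

/-- Moore-type bound: a triangle- and `C₄`-free graph with minimum degree at least 2
has at least `2δ + 1` vertices. -/
lemma moore [Nonempty V] (hδ : 2 ≤ H.minDegree)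
    (ht : ∀ a b c, H.Adj a b → H.Adj b c → H.Adj c a → False)
    (hc4 : ∀ a b c d, H.Adj a b → H.Adj b c → H.Adj c d → H.Adj d a → a ≠ c → b = d) :
    2 * H.minDegree + 1 ≤ Fintype.card V := by
  classical
  obtain ⟨v0, hv0⟩ := H.exists_minimal_degree_vertex
  have hne : ∀ u ∈ H.neighborFinset v0, ((H.neighborFinset u).erase v0).Nonempty := by
    intro u hu
    have h2 : 2 ≤ (H.neighborFinset u).card := by
      rw [card_neighborFinset_eq_degree]; exact hδ.trans (H.minDegree_le_degree u)
    rw [← Finset.card_pos]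
    have := Finset.pred_card_le_card_erase (s := H.neighborFinset u) (a := v0)
    omega
  set f : V → V := fun u => if h : ((H.neighborFinset u).erase v0).Nonempty then h.choose else u
    with hf
  have hfspec : ∀ u ∈ H.neighborFinset v0, f u ∈ (H.neighborFinset u).erase v0 := by
    intro u hu
    have h := hne u hu
    simpa [hf, h] using h.choose_spec
  have hfadj : ∀ u ∈ H.neighborFinset v0, H.Adj u (f u) := by
    intro u hu
    have := hfspec u hu
    rw [Finset.mem_erase, mem_neighborFinset] at this
    exact this.2
  have hfne : ∀ u ∈ H.neighborFinset v0, f u ≠ v0 := by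
    intro u hu
    exact (Finset.mem_erase.mp (hfspec u hu)).1
  have hdisj : ∀ u ∈ H.neighborFinset v0, f u ∉ insert v0 (H.neighborFinset v0) := by
    intro u hu hmem
    rcases Finset.mem_insert.mp hmem with h | h
    · exact hfne u hu h
    · exact ht v0 u (f u) ((mem_neighborFinset _ _ _).mp hu) (hfadj u hu)
        ((mem_neighborFinset _ _ _).mp h).symm
  have hinj : Set.InjOn f (H.neighborFinset v0) := by
    intro u1 hu1 u2 hu2 heq
    simp only [Finset.coe_insert, Set.mem_insert_iff, Finset.mem_coe] at hu1 hu2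
    by_contra hne'
    have h1 : H.Adj v0 u1 := (mem_neighborFinset _ _ _).mp hu1
    have h2 : H.Adj v0 u2 := (mem_neighborFinset _ _ _).mp hu2
    have := hc4 v0 u1 (f u1) u2 h1 (hfadj u1 hu1) (heq ▸ (hfadj u2 hu2)).symm h2.symm
      (fun h => hfne u1 hu1 h.symm)
    exact hne' this
  have hcard : (insert v0 (H.neighborFinset v0) ∪ (H.neighborFinset v0).image f).card
      ≤ Fintype.card V := by
    rw [← Finset.card_univ]; exact Finset.card_le_card (Finset.subset_univ _)
  rw [Finset.card_union_of_disjoint, Finset.card_insert_of_notMem (H.notMem_neighborFinset_self v0),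
    Finset.card_image_of_injOn hinj, card_neighborFinset_eq_degree] at hcard
  · have := H.minDegree_le_degree v0
    omega
  · rw [Finset.disjoint_right]
    intro x hx
    obtain ⟨u, hu, rfl⟩ := Finset.mem_image.mp hx
    exact hdisj u hu

/-- Davila–Kenter: for a triangle- and `C₄`-free graph with minimum degree at least 2, any zero
forcing set has at least `2δ − 2` vertices. -/
lemma dk_bound [Nonempty V] (hδ : 2 ≤ H.minDegree)
    (ht : ∀ a b c, H.Adj a b → H.Adj b c → H.Adj c a → False)
    (hc4 : ∀ a b c d, H.Adj a b → H.Adj b c → H.Adj c d → H.Adj d a → a ≠ c → b = d)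
    (S : Finset V) (hS : H.IsZeroForcingSet ↑S) : 2 * H.minDegree ≤ S.card + 2 := by
  classical
  have hmoore := moore H hδ ht hc4
  by_cases hSuniv : (↑S : Set V) = Set.univ
  · have : S = Finset.univ := by
      apply Finset.coe_injective; rw [hSuniv, Finset.coe_univ]
    rw [this, Finset.card_univ]
    omega
  obtain ⟨v, w, hvS, hwS, hvw, hprem⟩ := ZFAux.exists_force H hS hSuniv
  have hS' : H.IsZeroForcingSet ↑(insert w S) := by
    intro z
    refine ZFAux.forced_mono H ?_ (hS z)
    rw [Finset.coe_insert]; exact Set.subset_insert _ _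
  by_cases hS'univ : (↑(insert w S) : Set V) = Set.univ
  · have : insert w S = Finset.univ := by
      apply Finset.coe_injective; rw [hS'univ, Finset.coe_univ]
    have hcard : S.card + 1 = Fintype.card V := by
      rw [← Finset.card_insert_of_notMem hwS, this, Finset.card_univ]
    omega
  obtain ⟨u, x, huS', hxS', hux, hprem'⟩ := ZFAux.exists_force H hS' hS'univ
  rw [Finset.coe_insert, Set.mem_insert_iff] at huS'
  have hxw : x ≠ w := by
    intro h; exact hxS' (by rw [h, Finset.coe_insert]; exact Set.mem_insert _ _)
  have hxS : x ∉ (S : Set V) := fun h =>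
    hxS' (by rw [Finset.coe_insert]; exact Set.mem_insert_of_mem _ h)
  have huv : u ≠ v := by
    rintro rfl
    exact hxS (hprem x hux hxw)
  -- the two neighborhoods
  set A : Finset V := (insert v (H.neighborFinset v)).erase w with hA
  set B : Finset V := ((insert u (H.neighborFinset u)).erase w).erase x with hB
  have hAS : A ⊆ S := by
    intro z hz
    rw [hA, Finset.mem_erase, Finset.mem_insert] at hz
    rcases hz.2 with rfl | hz'
    · exact hvS
    · exact hprem z ((mem_neighborFinset _ _ _).mp hz') hz.1
  have hBS : B ⊆ S := by
    intro z hz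
    rw [hB, Finset.mem_erase, Finset.mem_erase, Finset.mem_insert] at hz
    obtain ⟨hzx, hzw, hz'⟩ := hz
    rcases hz' with rfl | hz'
    · rcases huS' with rfl | h
      · exact absurd rfl hzw
      · exact h
    · have := hprem' z ((mem_neighborFinset _ _ _).mp hz') hzx
      rw [Finset.coe_insert, Set.mem_insert_iff] at this
      rcases this with rfl | h
      · exact absurd rfl hzw
      · exact h
  have hcardA : A.card = H.degree v := by
    rw [hA, Finset.card_erase_of_mem (Finset.mem_insert_of_mem
      ((mem_neighborFinset _ _ _).mpr hvw)), Finset.card_insert_of_notMem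
      (H.notMem_neighborFinset_self v), card_neighborFinset_eq_degree]
    omega
  have hdegv : H.minDegree ≤ H.degree v := H.minDegree_le_degree v
  have hdegu : H.minDegree ≤ H.degree u := H.minDegree_le_degree u
  have hABS : (A ∪ B).card ≤ S.card := Finset.card_le_card (Finset.union_subset hAS hBS)
  have hkey := Finset.card_union_add_card_inter A B
  -- case analysis
  by_cases huw : u = w
  · -- case u = w
    subst huw
    have hBeq : B = (H.neighborFinset u).erase x := by
      rw [hB, Finset.erase_insert (H.notMem_neighborFinset_self u)]
    have hcardB : B.card = H.degree u - 1 := by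
      rw [hBeq, Finset.card_erase_of_mem ((mem_neighborFinset _ _ _).mpr hux),
        card_neighborFinset_eq_degree]
    have hI : (A ∩ B).card ≤ 1 := by
      rw [Finset.card_le_one]
      intro a ha b hb
      have hone : ∀ z ∈ A ∩ B, z = v := by
        intro z hz
        rw [Finset.mem_inter, hA, hBeq, Finset.mem_erase, Finset.mem_insert,
          Finset.mem_erase] at hz
        obtain ⟨⟨hzw, hz1⟩, hzx, hz2⟩ := hz
        rcases hz1 with rfl | hz1
        · rfl
        · exact (ht v z u ((mem_neighborFinset _ _ _).mp hz1)
            ((mem_neighborFinset _ _ _).mp hz2).symm hvw.symm).elim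
      rw [hone a ha, hone b hb]
    omega
  · have huS : u ∈ (S : Set V) := huS'.resolve_left huw
    by_cases hadjvu : H.Adj v u
    · -- u adjacent to v
      have hwu : w ∉ insert u (H.neighborFinset u) := by
        rw [Finset.mem_insert]
        rintro (rfl | h)
        · exact huw rfl
        · exact ht v u w hadjvu ((mem_neighborFinset _ _ _).mp h) hvw.symm
      have hBeq : B = (insert u (H.neighborFinset u)).erase x := by
        rw [hB, Finset.erase_eq_of_notMem hwu]
      have hcardB : B.card = H.degree u := by
        have : (insert u (H.neighborFinset u)).card = H.degree u + 1 := by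
          rw [Finset.card_insert_of_notMem (H.notMem_neighborFinset_self u),
            card_neighborFinset_eq_degree]
        rw [hBeq, Finset.card_erase_of_mem (Finset.mem_insert_of_mem
          ((mem_neighborFinset _ _ _).mpr hux)), this]
        omega
      have hI : (A ∩ B).card ≤ 2 := by
        have hsub : A ∩ B ⊆ {v, u} := by
          intro z hz
          rw [Finset.mem_inter, hA, hBeq, Finset.mem_erase, Finset.mem_insert,
            Finset.mem_erase, Finset.mem_insert] at hz
          obtain ⟨⟨hzw, hz1⟩, hzx, hz2⟩ := hz
          rw [Finset.mem_insert, Finset.mem_singleton]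
          rcases hz1 with rfl | hz1
          · exact Or.inl rfl
          rcases hz2 with rfl | hz2
          · exact Or.inr rfl
          · exact (ht z u v ((mem_neighborFinset _ _ _).mp hz2).symm
              hadjvu.symm ((mem_neighborFinset _ _ _).mp hz1)).elim
        calc (A ∩ B).card ≤ ({v, u} : Finset V).card := Finset.card_le_card hsub
          _ ≤ 2 := Finset.card_insert_le _ _ |>.trans (by simp)
      omega
    · -- u not adjacent to v
      have hcardB : H.degree u ≤ B.card + 1 := by
        have e1 := Finset.pred_card_le_card_erase
          (s := (insert u (H.neighborFinset u)).erase w) (a := x)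
        have e2 := Finset.pred_card_le_card_erase (s := insert u (H.neighborFinset u)) (a := w)
        have e3 : (insert u (H.neighborFinset u)).card = H.degree u + 1 := by
          rw [Finset.card_insert_of_notMem (H.notMem_neighborFinset_self u),
            card_neighborFinset_eq_degree]
        rw [hB]; omega
      have hI : (A ∩ B).card ≤ 1 := by
        rw [Finset.card_le_one]
        have hcn : ∀ z ∈ A ∩ B, H.Adj v z ∧ H.Adj u z := by
          intro z hz
          rw [Finset.mem_inter, hA, hB, Finset.mem_erase, Finset.mem_insert,
            Finset.mem_erase, Finset.mem_erase, Finset.mem_insert] at hz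
          obtain ⟨⟨hzw, hz1⟩, hzx, hzw2, hz2⟩ := hz
          rcases hz1 with rfl | hz1
          · rcases hz2 with rfl | hz2
            · exact absurd rfl huv.symm
            · exact absurd ((mem_neighborFinset _ _ _).mp hz2) (fun h => hadjvu h.symm)
          rcases hz2 with rfl | hz2
          · exact absurd ((mem_neighborFinset _ _ _).mp hz1) hadjvu
          · exact ⟨(mem_neighborFinset _ _ _).mp hz1, (mem_neighborFinset _ _ _).mp hz2⟩
        intro a ha b hb
        obtain ⟨ha1, ha2⟩ := hcn a ha
        obtain ⟨hb1, hb2⟩ := hcn b hb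
        exact hc4 v a u b ha1 ha2.symm hb2 hb1.symm huv.symm
      omega

end DK

section Final
open SimpleGraph Finset

lemma minDegree_of_isEmpty {W : Type*} [Fintype W] [IsEmpty W] (H : SimpleGraph W)
    (d : DecidableRel H.Adj) : @SimpleGraph.minDegree _ H _ d = 0 := by
  simp [SimpleGraph.minDegree, Finset.univ_eq_empty]

end Final

/-- if deleting a set `K` of `k` vertices leaves a graph of minimum degree at
least 2 and girth at least 5, then `Z(G) ≥ 2δ − 3k − 2`. -/
theorem zf_delete_set {V : Type*} [Fintype V] [DecidableEq V] (G : SimpleGraph V)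
    [DecidableRel G.Adj] (K : Finset V) (k : ℕ) (hk : K.card = k)
    (hδ' : 2 ≤ @SimpleGraph.minDegree _ (G.induce (↑K : Set V)ᶜ) _ (Classical.decRel _))
    (hg : 5 ≤ (G.induce (↑K : Set V)ᶜ).egirth) :
    (2 * (G.minDegree : ℤ) - 3 * k - 2) ≤ G.zeroForcingNumber := by
  classical
  open SimpleGraph in
  set H := G.induce (↑K : Set V)ᶜ with hH
  letI dH : DecidableRel H.Adj := Classical.decRel _
  -- nonempty
  haveI hne : Nonempty ((↑K : Set V)ᶜ : Set V) := by
    by_contra h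
    rw [not_nonempty_iff] at h
    rw [minDegree_of_isEmpty H (Classical.decRel _)] at hδ'
    omega
  -- triangle- and C4-freeness of H
  have ht : ∀ a b c, H.Adj a b → H.Adj b c → H.Adj c a → False :=
    fun a b c h1 h2 h3 => ZFAux.no_triangle hg h1 h2 h3
  have hc4 : ∀ a b c d, H.Adj a b → H.Adj b c → H.Adj c d → H.Adj d a → a ≠ c → b = d := by
    intro a b c d h1 h2 h3 h4 hac
    by_contra hbd
    exact ZFAux.no_c4 hg h1 h2 h3 h4 hac hbd
  -- minimum degree comparison
  have hdeg : G.minDegree ≤ H.minDegree + k := by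
    obtain ⟨v0, hv0⟩ := H.exists_minimal_degree_vertex
    have hsub : G.neighborFinset ↑v0 ⊆ K ∪ (H.neighborFinset v0).image
        Subtype.val := by
      intro u hu
      rw [Finset.mem_union]
      by_cases huK : u ∈ K
      · exact Or.inl huK
      · refine Or.inr (Finset.mem_image.mpr ⟨⟨u, by simpa using huK⟩, ?_, rfl⟩)
        rw [SimpleGraph.mem_neighborFinset]
        simpa [hH] using (G.mem_neighborFinset ↑v0 u).mp hu
    have hdG : G.degree ↑v0 ≤ k + H.degree v0 := by
      calc G.degree ↑v0 = (G.neighborFinset ↑v0).card := rfl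
        _ ≤ (K ∪ (H.neighborFinset v0).image Subtype.val).card :=
            Finset.card_le_card hsub
        _ ≤ K.card + ((H.neighborFinset v0).image Subtype.val).card :=
            Finset.card_union_le _ _
        _ ≤ k + H.degree v0 := by
            rw [hk]
            exact Nat.add_le_add_left (Finset.card_image_le.trans_eq rfl) _
    have := G.minDegree_le_degree ↑v0
    omega
  -- a minimum zero forcing set of G
  have hZne : {n | ∃ S : Finset V, G.IsZeroForcingSet ↑S ∧ S.card = n}.Nonempty :=
    ⟨(Finset.univ : Finset V).card, Finset.univ, fun v => .init (by simp), rfl⟩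
  obtain ⟨S, hS, hScard⟩ := Nat.sInf_mem hZne
  obtain ⟨T, hT, hTcard⟩ := ZFAux.zf_delete G K S hS
  have hdk := dk_bound H hδ' ht hc4 T hT
  rw [hk] at hTcard
  have hz : G.zeroForcingNumber = S.card := hScard.symm
  omega
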